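/- arXiv:2111.03298 — 4 statements merged into one kernel-verified Lean document; each statement's English description precedes it below -/
import Mathlib

section
/- Let G ∈ QT_1 and let G' = G[V(G) \ {x, w, v, z}] be the subgraph of G induced by all vertices except x, w, v, z. If γ_t(G') ≤ a(G') + 1, then γ_t(G) ≤ a(G) + 1. -/
open SimpleGraph

/-- The total domination number of a graph. -/
noncomputable def totalDominationNumber {V : Type*} (G : SimpleGraph V) : ℕ :=
  sInf {k | ∃ D : Finset V, (∀ v : V, ∃ u ∈ D, G.Adj v u) ∧ D.card = k}

/-- The annihilation number of a graph. -/
noncomputable def annihilationNumber {V : Type*} (G : SimpleGraph V) : ℕ :=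
  sSup {k | ∃ S : Finset V, S.card = k ∧ ∑ v ∈ S, (G.neighborSet v).ncard ≤ G.edgeSet.ncard}

/-- Statuses used in the definition of the family `Γ`. -/
inductive Status
  | A | B | C

/-- A graph whose vertices are labeled with statuses. -/
structure LGraph where
  V : Type
  G : SimpleGraph V
  sta : V → Status

/-- Status-preserving isomorphism of labeled graphs. -/
def LIso (L₁ L₂ : LGraph) : Prop :=
  ∃ e : L₁.G ≃g L₂.G, ∀ v, L₂.sta (e v) = L₁.sta v

/-- The base labeled tree `T₀`: a path `P₆` whose two leaves have status `C`,
whose two support vertices have status `A`, and whose middle vertices have status `B`. -/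
def baseT0 : LGraph where
  V := Fin 6
  G := SimpleGraph.fromRel (fun i j => (i : ℕ) + 1 = (j : ℕ))
  sta := ![Status.C, Status.A, Status.B, Status.B, Status.A, Status.C]

/-- Operation `o₁`: to a labeled graph `L` with chosen vertex `y`, attach a new path
`x–w–v–z` (the vertices `Sum.inr 0, 1, 2, 3`) together with the edge `x y`, statuses
`sta x = sta w = B`, `sta v = A`, `sta z = C`. -/
def o1Ext (L : LGraph) (y : L.V) : LGraph where
  V := L.V ⊕ Fin 4
  G := (L.G.map Function.Embedding.inl) ⊔
    SimpleGraph.fromEdgeSet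
      {s(Sum.inl y, Sum.inr 0), s(Sum.inr 0, Sum.inr 1),
       s(Sum.inr 1, Sum.inr 2), s(Sum.inr 2, Sum.inr 3)}
  sta := Sum.elim L.sta ![Status.B, Status.B, Status.A, Status.C]

/-- Operation `o₂`: to a labeled graph `L` with chosen vertex `y`, attach a new path
`x–w–v` (the vertices `Sum.inr 0, 1, 2`) together with the edge `x y`, statuses
`sta x = B`, `sta w = A`, `sta v = C`. -/
def o2Ext (L : LGraph) (y : L.V) : LGraph where
  V := L.V ⊕ Fin 3
  G := (L.G.map Function.Embedding.inl) ⊔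
    SimpleGraph.fromEdgeSet
      {s(Sum.inl y, Sum.inr 0), s(Sum.inr 0, Sum.inr 1), s(Sum.inr 1, Sum.inr 2)}
  sta := Sum.elim L.sta ![Status.B, Status.A, Status.C]

/-- The family `Γ` of labeled trees (closed under status-preserving isomorphism):
it contains `T₀` and is closed under operation `o₁` (applied at a leaf of status `C`)
and operation `o₂` (applied at a vertex of status `B`). -/
inductive InGamma : LGraph → Prop
  | base (L : LGraph) : LIso baseT0 L → InGamma L
  | op1 (L : LGraph) (y : L.V) (hL : InGamma L) (hsta : L.sta y = Status.C)
      (hleaf : (L.G.neighborSet y).ncard = 1) (L' : LGraph) (h : LIso (o1Ext L y) L') :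
      InGamma L'
  | op2 (L : LGraph) (y : L.V) (hL : InGamma L) (hsta : L.sta y = Status.B)
      (L' : LGraph) (h : LIso (o2Ext L y) L') : InGamma L'

/-- Add one new vertex `h = Sum.inr ()` to `G` and join it to every vertex in `S`. -/
def attachVertex {V : Type} (G : SimpleGraph V) (S : Set V) : SimpleGraph (V ⊕ Unit) :=
  (G.map Function.Embedding.inl) ⊔
    SimpleGraph.fromEdgeSet {e | ∃ u ∈ S, e = s(Sum.inl u, Sum.inr ())}

/-! If `G` has an isolated vertex then `γₜ(G) = sInf ∅ = 0`. Otherwise `G' = G - {x, w, v, z}`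
has none either: `yx` is the only edge between `G'` and the path `xwvz`, and `y` keeps its
neighbour in `T`. Adding `w, v` to a minimum total dominating set of `G'` gives one of `G`, so
`γₜ(G) ≤ γₜ(G') + 2`. Adding `v, z` (degrees `2` and `1`) to a maximum annihilating set of `G'`
gives one of `G`: passing from `G'` to `G` raises the degree sum of the old vertices by at most
`1` (only `y` gains a neighbour) and raises the number of edges by `4`. So
`a(G) ≥ a(G') + 2`, and `γₜ(G) ≤ γₜ(G') + 2 ≤ a(G') + 3 ≤ a(G) + 1`. -/

section General

variable {V : Type*} {G : SimpleGraph V}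

section TotalDomination

theorem totalDominationNumber_le_card {D : Finset V} (hD : ∀ v, ∃ u ∈ D, G.Adj v u) :
    totalDominationNumber G ≤ D.card :=
  Nat.sInf_le ⟨D, hD, rfl⟩

theorem totalDominationNumber_eq_zero_of_isolated {v : V} (hv : ∀ u, ¬G.Adj v u) :
    totalDominationNumber G = 0 := by
  rw [totalDominationNumber, Nat.sInf_eq_zero, Set.eq_empty_iff_forall_notMem]
  refine Or.inr fun k ⟨D, hD, _⟩ => ?_
  obtain ⟨u, -, hu⟩ := hD v
  exact hv u hu

theorem exists_totalDominating_card_eq [Finite V] (hG : ∀ v, ∃ u, G.Adj v u) :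
    ∃ D : Finset V, (∀ v, ∃ u ∈ D, G.Adj v u) ∧ D.card = totalDominationNumber G := by
  have := Fintype.ofFinite V
  refine Nat.sInf_mem (s := {k | ∃ D : Finset V, (∀ v, ∃ u ∈ D, G.Adj v u) ∧ D.card = k})
    ⟨_, Finset.univ, fun v => ?_, rfl⟩
  obtain ⟨u, hu⟩ := hG v
  exact ⟨u, Finset.mem_univ u, hu⟩

end TotalDomination

section Annihilation

variable [Finite V]

theorem bddAbove_setOf_annihilating :
    BddAbove {k | ∃ S : Finset V, S.card = k ∧
      ∑ v ∈ S, (G.neighborSet v).ncard ≤ G.edgeSet.ncard} := by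
  have := Fintype.ofFinite V
  exact ⟨Fintype.card V, by rintro _ ⟨S, rfl, -⟩; exact S.card_le_univ⟩

theorem card_le_annihilationNumber {S : Finset V}
    (hS : ∑ v ∈ S, (G.neighborSet v).ncard ≤ G.edgeSet.ncard) :
    S.card ≤ annihilationNumber G :=
  le_csSup bddAbove_setOf_annihilating ⟨S, rfl, hS⟩

theorem exists_annihilating_card_eq :
    ∃ S : Finset V, S.card = annihilationNumber G ∧
      ∑ v ∈ S, (G.neighborSet v).ncard ≤ G.edgeSet.ncard := by
  apply Nat.sSup_mem _ bddAbove_setOf_annihilating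
  exact ⟨0, ∅, rfl, by simp⟩

end Annihilation

section Induce

variable {s : Set V}

theorem ncard_neighborSet_induce (u : s) :
    ((G.induce s).neighborSet u).ncard = (s ∩ G.neighborSet u).ncard := by
  rw [neighborSet_induce, ← Subtype.image_preimage_val,
    Set.ncard_image_of_injective _ Subtype.val_injective]

theorem ncard_edgeSet_induce_add_le [Finite V] {E : Set (Sym2 V)} (hE : E ⊆ G.edgeSet)
    (hEs : ∀ e ∈ E, ∃ u ∈ e, u ∉ s) :
    (G.induce s).edgeSet.ncard + E.ncard ≤ G.edgeSet.ncard := by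
  set I := Sym2.map ((↑) : s → V) '' (G.induce s).edgeSet
  have hI : I.ncard = (G.induce s).edgeSet.ncard :=
    Set.ncard_image_of_injective _ (Sym2.map.injective Subtype.val_injective)
  have hIE : Disjoint I E := by
    refine Set.disjoint_left.mpr ?_
    rintro _ ⟨e, -, rfl⟩ he
    obtain ⟨u, hu, hus⟩ := hEs _ he
    obtain ⟨u', -, rfl⟩ := Sym2.mem_map.mp hu
    exact hus u'.2
  rw [← hI, ← Set.ncard_union_eq hIE]
  exact Set.ncard_le_ncard (Set.union_subset (Embedding.induce s).toHom.image_edgeSet_subset hE)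

theorem totalDominationNumber_le_induce_add [Finite V]
    (hs : ∀ u : s, ∃ u', (G.induce s).Adj u u') {D : Finset V}
    (hD : ∀ v ∉ s, ∃ u ∈ D, G.Adj v u) :
    totalDominationNumber G ≤ totalDominationNumber (G.induce s) + D.card := by
  classical
  obtain ⟨D', hD', hcard⟩ := exists_totalDominating_card_eq hs
  calc totalDominationNumber G ≤ (D'.map (Function.Embedding.subtype _) ∪ D).card := by
        refine totalDominationNumber_le_card fun v => ?_
        by_cases hv : v ∈ s
        · obtain ⟨u, hu, hvu⟩ := hD' ⟨v, hv⟩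
          exact ⟨u, Finset.mem_union_left _ (Finset.mem_map_of_mem _ hu), hvu⟩
        · obtain ⟨u, hu, hvu⟩ := hD v hv
          exact ⟨u, Finset.mem_union_right _ hu, hvu⟩
    _ ≤ D'.card + D.card := (Finset.card_union_le _ _).trans_eq (by rw [Finset.card_map])
    _ = totalDominationNumber (G.induce s) + D.card := by rw [hcard]

end Induce

section SingleEdgeCut

variable {s : Set V} {x y : V}

theorem exists_induce_adj_of_cut (hcut : ∀ u ∈ s, ∀ q ∉ s, G.Adj u q → u = y ∧ q = x)
    (hG : ∀ v, ∃ u, G.Adj v u) (hy : ∃ q ∈ s, G.Adj y q) (u : s) :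
    ∃ u', (G.induce s).Adj u u' := by
  by_cases huy : (u : V) = y
  · obtain ⟨q, hq, hyq⟩ := hy
    exact ⟨⟨q, hq⟩, show G.Adj u q from huy ▸ hyq⟩
  · obtain ⟨q, huq⟩ := hG u
    have hq : q ∈ s := by_contra fun hq => huy (hcut u u.2 q hq huq).1
    exact ⟨⟨q, hq⟩, huq⟩

theorem ncard_neighborSet_le_induce_add (hcut : ∀ u ∈ s, ∀ q ∉ s, G.Adj u q → u = y ∧ q = x)
    [Finite V] [DecidableEq V] (u : s) :
    (G.neighborSet u).ncard ≤
      ((G.induce s).neighborSet u).ncard + if (u : V) = y then 1 else 0 := by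
  rw [ncard_neighborSet_induce, Set.inter_comm,
    ← Set.ncard_inter_add_ncard_sdiff_eq_ncard (G.neighborSet u) s]
  gcongr
  split_ifs with huy
  · have hsub : G.neighborSet u \ s ⊆ {x} := fun q ⟨huq, hq⟩ => (hcut u u.2 q hq huq).2
    exact (Set.ncard_le_ncard hsub).trans (Set.ncard_singleton x).le
  · have hempty : G.neighborSet u \ s = ∅ :=
      Set.eq_empty_of_forall_notMem fun q hq => huy (hcut u u.2 q hq.2 hq.1).1
    rw [hempty, Set.ncard_empty]

theorem sum_ncard_neighborSet_le_induce_add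
    (hcut : ∀ u ∈ s, ∀ q ∉ s, G.Adj u q → u = y ∧ q = x) [Finite V] [DecidableEq V]
    (S : Finset s) :
    ∑ u ∈ S, (G.neighborSet u).ncard ≤ ∑ u ∈ S, ((G.induce s).neighborSet u).ncard + 1 := by
  calc ∑ u ∈ S, (G.neighborSet u).ncard
      ≤ ∑ u ∈ S, (((G.induce s).neighborSet u).ncard + if (u : V) = y then 1 else 0) :=
        Finset.sum_le_sum fun u _ => ncard_neighborSet_le_induce_add hcut u
    _ = ∑ u ∈ S, ((G.induce s).neighborSet u).ncard +
          (S.filter fun u : s => (u : V) = y).card := by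
        rw [Finset.sum_add_distrib, Finset.sum_boole, Nat.cast_id]
    _ ≤ ∑ u ∈ S, ((G.induce s).neighborSet u).ncard + 1 := by
        gcongr
        refine Finset.card_le_one.mpr fun a ha b hb => Subtype.val_injective ?_
        rw [(Finset.mem_filter.mp ha).2, (Finset.mem_filter.mp hb).2]

theorem annihilationNumber_induce_add_le
    (hcut : ∀ u ∈ s, ∀ q ∉ s, G.Adj u q → u = y ∧ q = x) [Finite V] {S : Finset V}
    (hS : ∀ u ∈ S, u ∉ s)
    (hsum : (G.induce s).edgeSet.ncard + ∑ u ∈ S, (G.neighborSet u).ncard + 1 ≤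
      G.edgeSet.ncard) :
    annihilationNumber (G.induce s) + S.card ≤ annihilationNumber G := by
  classical
  obtain ⟨S', hcard, hS'⟩ := exists_annihilating_card_eq (G := G.induce s)
  have hdisj : Disjoint (S'.map (Function.Embedding.subtype _)) S := by
    refine Finset.disjoint_left.mpr fun u hu huS => ?_
    obtain ⟨u, -, rfl⟩ := Finset.mem_map.mp hu
    exact hS _ huS u.2
  rw [← hcard, ← Finset.card_map (Function.Embedding.subtype _),
    ← Finset.card_union_of_disjoint hdisj]
  refine card_le_annihilationNumber ?_
  rw [Finset.sum_union hdisj, Finset.sum_map]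
  calc ∑ u ∈ S', (G.neighborSet u).ncard + ∑ u ∈ S, (G.neighborSet u).ncard
      ≤ ∑ u ∈ S', ((G.induce s).neighborSet u).ncard + 1 +
          ∑ u ∈ S, (G.neighborSet u).ncard := by
        gcongr
        exact sum_ncard_neighborSet_le_induce_add hcut S'
    _ ≤ G.edgeSet.ncard := by omega

end SingleEdgeCut

end General

theorem InGamma.finite {L : LGraph} (h : InGamma L) : Finite L.V := by
  induction h with
  | base L h =>
    obtain ⟨e, -⟩ := h
    exact Finite.of_equiv (Fin 6) e.toEquiv
  | op1 L _ _ _ _ _ h ih =>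
    obtain ⟨e, -⟩ := h
    exact Finite.of_equiv (L.V ⊕ Fin 4) e.toEquiv
  | op2 L _ _ _ _ h ih =>
    obtain ⟨e, -⟩ := h
    exact Finite.of_equiv (L.V ⊕ Fin 3) e.toEquiv

def pendantPath (V : Type) : Set ((V ⊕ Fin 4) ⊕ Unit) :=
  {Sum.inl (Sum.inr 0), Sum.inl (Sum.inr 1), Sum.inl (Sum.inr 2), Sum.inl (Sum.inr 3)}

namespace QuasiTree

open Sum

variable {L : LGraph} {y : L.V} {N : Set L.V} {G : SimpleGraph ((L.V ⊕ Fin 4) ⊕ Unit)}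

theorem adj_inl_inl (hG : G = attachVertex (V := L.V ⊕ Fin 4) (o1Ext L y).G (inl '' N))
    {a b : L.V} : G.Adj (inl (inl a)) (inl (inl b)) ↔ L.G.Adj a b := by
  subst hG
  simp [attachVertex, o1Ext]

theorem cut (hG : G = attachVertex (V := L.V ⊕ Fin 4) (o1Ext L y).G (inl '' N)) :
    ∀ u ∈ (pendantPath L.V)ᶜ, ∀ q ∉ (pendantPath L.V)ᶜ, G.Adj u q →
      u = inl (inl y) ∧ q = inl (inr 0) := by
  subst hG
  intro u hu q hq huq
  simp only [Set.notMem_compl_iff, pendantPath, Set.mem_insert_iff, Set.mem_singleton_iff] at hq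
  rcases hq with rfl | rfl | rfl | rfl <;> rcases u with (a | i) | u <;>
    simp_all [attachVertex, o1Ext, pendantPath]

theorem exists_adj_of_mem_pendantPath [DecidableEq L.V]
    (hG : G = attachVertex (V := L.V ⊕ Fin 4) (o1Ext L y).G (inl '' N)) :
    ∀ p ∉ (pendantPath L.V)ᶜ,
      ∃ u ∈ ({inl (inr 1), inl (inr 2)} : Finset ((L.V ⊕ Fin 4) ⊕ Unit)), G.Adj p u := by
  subst hG
  intro p hp
  simp only [Set.notMem_compl_iff, pendantPath, Set.mem_insert_iff, Set.mem_singleton_iff] at hp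
  rcases hp with rfl | rfl | rfl | rfl <;> simp [attachVertex, o1Ext]

theorem sum_ncard_neighborSet_pendant_end [DecidableEq L.V]
    (hG : G = attachVertex (V := L.V ⊕ Fin 4) (o1Ext L y).G (inl '' N)) :
    ∑ u ∈ ({inl (inr 2), inl (inr 3)} : Finset ((L.V ⊕ Fin 4) ⊕ Unit)),
      (G.neighborSet u).ncard = 3 := by
  have h2 : G.neighborSet (inl (inr 2)) = {inl (inr 1), inl (inr 3)} := by
    subst hG
    ext ((a | i) | u) <;> try fin_cases i
    all_goals simp [attachVertex, o1Ext]
  have h3 : G.neighborSet (inl (inr 3)) = {inl (inr 2)} := by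
    subst hG
    ext ((a | i) | u) <;> try fin_cases i
    all_goals simp [attachVertex, o1Ext]
  rw [Finset.sum_pair (by simp), h2, h3, Set.ncard_pair (by simp), Set.ncard_singleton]

theorem ncard_edgeSet_induce_add_four_le [Finite L.V]
    (hG : G = attachVertex (V := L.V ⊕ Fin 4) (o1Ext L y).G (inl '' N)) :
    (G.induce (pendantPath L.V)ᶜ).edgeSet.ncard + 4 ≤ G.edgeSet.ncard := by
  set E : Set (Sym2 ((L.V ⊕ Fin 4) ⊕ Unit)) := {s(inl (inl y), inl (inr 0)),
    s(inl (inr 0), inl (inr 1)), s(inl (inr 1), inl (inr 2)), s(inl (inr 2), inl (inr 3))}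
  have hE : E.ncard = 4 := by
    rw [Set.ncard_insert_of_notMem (by simp), Set.ncard_insert_of_notMem (by simp),
      Set.ncard_pair (by simp)]
  have hEG : E ⊆ G.edgeSet := by
    subst hG
    simp [E, Set.insert_subset_iff, attachVertex, o1Ext]
  have hEs : ∀ e ∈ E, ∃ u ∈ e, u ∉ (pendantPath L.V)ᶜ := by
    simp [E, pendantPath]
  have := ncard_edgeSet_induce_add_le hEG hEs
  rwa [hE] at this

end QuasiTree

theorem stmt_1_general (T : LGraph) (y : T.V)
    (hT : InGamma T) (hleaf : (T.G.neighborSet y).ncard = 1)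
    (N : Finset T.V)
    (G : SimpleGraph ((T.V ⊕ Fin 4) ⊕ Unit))
    (hG : G = attachVertex (o1Ext T y).G (Sum.inl '' (N : Set T.V)))
    (h' :
      totalDominationNumber (G.induce
        {u | u ∉ ({Sum.inl (Sum.inr 0), Sum.inl (Sum.inr 1), Sum.inl (Sum.inr 2),
          Sum.inl (Sum.inr 3)} : Set ((T.V ⊕ Fin 4) ⊕ Unit))}) ≤
      annihilationNumber (G.induce
        {u | u ∉ ({Sum.inl (Sum.inr 0), Sum.inl (Sum.inr 1), Sum.inl (Sum.inr 2),
          Sum.inl (Sum.inr 3)} : Set ((T.V ⊕ Fin 4) ⊕ Unit))}) + 1) :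
    totalDominationNumber G ≤ annihilationNumber G + 1 := by
  classical
  have := hT.finite
  -- `hG` elaborates `attachVertex` at the vertex type `(o1Ext T y).V`; restated at the
  -- defeq type `T.V ⊕ Fin 4`, the adjacency lemmas of `SimpleGraph` apply to it under `simp`.
  replace hG :
      G = attachVertex (V := T.V ⊕ Fin 4) (o1Ext T y).G (Sum.inl '' (N : Set T.V)) := hG
  replace h' : totalDominationNumber (G.induce (pendantPath T.V)ᶜ) ≤
      annihilationNumber (G.induce (pendantPath T.V)ᶜ) + 1 := h'
  by_cases hG_iso : ∀ p, ∃ q, G.Adj p q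
  swap
  · obtain ⟨p, hp⟩ := not_forall.mp hG_iso
    rw [totalDominationNumber_eq_zero_of_isolated (not_exists.mp hp)]
    exact Nat.zero_le _
  have hcut := QuasiTree.cut hG
  obtain ⟨b, hb⟩ : (T.G.neighborSet y).Nonempty := Set.nonempty_of_ncard_ne_zero (by omega)
  have hdom := totalDominationNumber_le_induce_add
    (exists_induce_adj_of_cut hcut hG_iso
      ⟨Sum.inl (Sum.inl b), by simp [pendantPath], (QuasiTree.adj_inl_inl hG).2 hb⟩)
    (QuasiTree.exists_adj_of_mem_pendantPath hG)
  have hann := annihilationNumber_induce_add_le hcut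
    (S := {Sum.inl (Sum.inr 2), Sum.inl (Sum.inr 3)}) (by simp [pendantPath])
    (by have := QuasiTree.ncard_edgeSet_induce_add_four_le hG
        rw [QuasiTree.sum_ncard_neighborSet_pendant_end hG]; omega)
  rw [Finset.card_pair (by simp)] at hdom hann
  omega

/-- Let `G ∈ QT₁`, i.e. `G` is obtained from a tree `T' = o1Ext T y ∈ Γ₁`
(where `T ∈ Γ`, `y` is a leaf of `T` of status `C`, and `x, w, v, z` are the vertices
added in the last step) and a new vertex `h` by adding `t ≥ 2` edges between `h` and
`V(T') \ {x, w, v, z}`. If `G' = G[V(G) \ {x, w, v, z}]` satisfies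
`γₜ(G') ≤ a(G') + 1`, then `γₜ(G) ≤ a(G) + 1`. -/
theorem stmt_1 (T : LGraph) (y : T.V)
    (hT : InGamma T) (hy : T.sta y = Status.C) (hleaf : (T.G.neighborSet y).ncard = 1)
    (N : Finset T.V) (htN : 2 ≤ N.card)
    (G : SimpleGraph ((T.V ⊕ Fin 4) ⊕ Unit))
    (hG : G = attachVertex (o1Ext T y).G (Sum.inl '' (N : Set T.V)))
    (h' :
      totalDominationNumber (G.induce
        {u | u ∉ ({Sum.inl (Sum.inr 0), Sum.inl (Sum.inr 1), Sum.inl (Sum.inr 2),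
          Sum.inl (Sum.inr 3)} : Set ((T.V ⊕ Fin 4) ⊕ Unit))}) ≤
      annihilationNumber (G.induce
        {u | u ∉ ({Sum.inl (Sum.inr 0), Sum.inl (Sum.inr 1), Sum.inl (Sum.inr 2),
          Sum.inl (Sum.inr 3)} : Set ((T.V ⊕ Fin 4) ⊕ Unit))}) + 1) :
    totalDominationNumber G ≤ annihilationNumber G + 1 :=
  stmt_1_general T y hT hleaf N G hG h'
end

section
/- If G and H are connected graphs with n(G) = n(H) ≥ 2 and f : V(G) → V(H) is a bijection, then γ_t(B(G,H,f)) ≤ a(B(G,H,f)) + 1, where B(G,H,f) is the bijection graph of G and H with respect to f. -/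
/-!
The copy of `G` is a total dominating set of `B(G, H, f)`: a connected graph on at least two
vertices has no isolated vertex, and every vertex of the copy of `H` is matched to one of `G`.
Hence `γₜ ≤ n`. On the other hand the degrees of the two copies add up to `2 m`, so the vertices
of one of the copies, `n` of them, have degree sum at most `m`, whence `n ≤ a`.
-/

open SimpleGraph

/-- The bijection graph `B(G, H, f)`: the disjoint union of `G` and `H` together with
the edges `u f(u)` for all vertices `u` of `G`. -/
def bijectionGraph {V W : Type*} (G : SimpleGraph V) (H : SimpleGraph W) (f : V → W) :
    SimpleGraph (V ⊕ W) :=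
  SimpleGraph.fromRel (fun a b =>
    (∃ u v, G.Adj u v ∧ a = Sum.inl u ∧ b = Sum.inl v) ∨
    (∃ u v, H.Adj u v ∧ a = Sum.inr u ∧ b = Sum.inr v) ∨
    (∃ u, a = Sum.inl u ∧ b = Sum.inr (f u)))

open Finset

namespace SimpleGraph

variable {V : Type*} (G : SimpleGraph V)

def IsTotalDominatingSet (D : Finset V) : Prop :=
  ∀ v, ∃ u ∈ D, G.Adj v u

lemma totalDominationNumber_le_card {D : Finset V} (hD : G.IsTotalDominatingSet D) :
    totalDominationNumber G ≤ #D :=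
  Nat.sInf_le ⟨D, hD, rfl⟩

section Finite

variable [Fintype V]

lemma card_le_annihilationNumber {S : Finset V}
    (hS : ∑ v ∈ S, (G.neighborSet v).ncard ≤ G.edgeSet.ncard) :
    #S ≤ annihilationNumber G :=
  le_csSup ⟨Fintype.card V, by rintro _ ⟨T, rfl, -⟩; exact card_le_univ T⟩ ⟨S, rfl, hS⟩

lemma sum_ncard_neighborSet_eq_two_mul_ncard_edgeSet :
    ∑ v, (G.neighborSet v).ncard = 2 * G.edgeSet.ncard := by
  classical
  simp only [Set.ncard_eq_toFinset_card', Set.toFinset_card, card_neighborSet_eq_degree,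
    sum_degrees_eq_twice_card_edges, edgeFinset_card]

lemma min_card_card_compl_le_annihilationNumber [DecidableEq V] (S : Finset V) :
    min #S #Sᶜ ≤ annihilationNumber G := by
  have hsum := G.sum_ncard_neighborSet_eq_two_mul_ncard_edgeSet
  rw [← sum_add_sum_compl S] at hsum
  by_cases hS : ∑ v ∈ S, (G.neighborSet v).ncard ≤ G.edgeSet.ncard
  · exact (min_le_left _ _).trans (G.card_le_annihilationNumber hS)
  · exact (min_le_right _ _).trans (G.card_le_annihilationNumber (by omega))

end Finite

end SimpleGraph

section BijectionGraph

variable {V W : Type*} (G : SimpleGraph V) (H : SimpleGraph W) (f : V → W)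

@[simp]
lemma bijectionGraph_adj_inl_inl {u v : V} :
    (bijectionGraph G H f).Adj (.inl u) (.inl v) ↔ G.Adj u v := by
  simpa [bijectionGraph, G.adj_comm v u] using fun h : G.Adj u v ↦ h.ne

@[simp]
lemma bijectionGraph_adj_inr_inl {w : W} {u : V} :
    (bijectionGraph G H f).Adj (.inr w) (.inl u) ↔ f u = w := by
  simp [bijectionGraph, eq_comm]

lemma isTotalDominatingSet_map_inl [Fintype V] (hG : ∀ v, ∃ u, G.Adj v u)
    (hf : Function.Surjective f) :
    (bijectionGraph G H f).IsTotalDominatingSet (univ.map .inl) := by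
  rintro (v | w)
  · obtain ⟨u, hu⟩ := hG v
    exact ⟨.inl u, by simp, by simpa using hu⟩
  · obtain ⟨u, rfl⟩ := hf w
    exact ⟨.inl u, by simp, by simp⟩

end BijectionGraph

theorem stmt_9_general {V W : Type*} [Fintype V] [Fintype W]
    (G : SimpleGraph V) (H : SimpleGraph W) (f : V → W)
    (hG : G.Connected)
    (hf : Function.Bijective f)
    (hn2 : 2 ≤ Fintype.card V) :
    totalDominationNumber (bijectionGraph G H f) ≤
      annihilationNumber (bijectionGraph G H f) + 1 := by
  classical
  have : Nontrivial V := Fintype.one_lt_card_iff_nontrivial.mp hn2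
  have hG_adj : ∀ v, ∃ u, G.Adj v u := fun v ↦
    exists_adj_iff_not_isIsolated.mpr (hG.preconnected.not_isIsolated v)
  set L : Finset (V ⊕ W) := univ.map .inl
  have hcard : #Lᶜ = #L := by
    simp [L, card_compl, Fintype.card_of_bijective hf]
  calc totalDominationNumber (bijectionGraph G H f)
      ≤ #L := totalDominationNumber_le_card _ (isTotalDominatingSet_map_inl G H f hG_adj hf.2)
    _ = min #L #Lᶜ := by rw [hcard, min_self]
    _ ≤ annihilationNumber (bijectionGraph G H f) := min_card_card_compl_le_annihilationNumber _ L
    _ ≤ _ := Nat.le_succ _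

/-- If `G` and `H` are connected graphs with `n(G) = n(H) ≥ 2` and
`f : V(G) → V(H)` is a bijection, then `γₜ(B(G,H,f)) ≤ a(B(G,H,f)) + 1`. -/
theorem stmt_9 {V W : Type*} [Fintype V] [Fintype W]
    (G : SimpleGraph V) (H : SimpleGraph W) (f : V → W)
    (hG : G.Connected) (hH : H.Connected)
    (hf : Function.Bijective f)
    (hn : Fintype.card V = Fintype.card W) (hn2 : 2 ≤ Fintype.card V) :
    totalDominationNumber (bijectionGraph G H f) ≤
      annihilationNumber (bijectionGraph G H f) + 1 :=
  stmt_9_general G H f hG hf hn2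
end

section
/- If G is a connected graph with γ_t(G) ≤ a(G) + 1, then γ_t(μ(G)) ≤ a(μ(G)) + 1, where μ(G) is the Mycielskian of G. -/
open SimpleGraph

/-- The Mycielskian `μ(G)` of `G`: it contains a copy of `G` (the vertices `Sum.inl v`),
for each vertex `v` of `G` a twin vertex `Sum.inr (Sum.inl v)`, and one further vertex
`w = Sum.inr (Sum.inr ())` adjacent to all the twin vertices; each edge `v v'` of `G`
yields the edges between `Sum.inl v` and the twin of `v'` (and vice versa). -/
def mycielskian {V : Type*} (G : SimpleGraph V) : SimpleGraph (V ⊕ (V ⊕ Unit)) :=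
  SimpleGraph.fromRel (fun a b =>
    (∃ u v, G.Adj u v ∧ a = Sum.inl u ∧ b = Sum.inl v) ∨
    (∃ u v, G.Adj u v ∧ a = Sum.inl u ∧ b = Sum.inr (Sum.inl v)) ∨
    (∃ u, a = Sum.inr (Sum.inl u) ∧ b = Sum.inr (Sum.inr ())))

lemma anni_ge {W : Type*} [Fintype W] (H : SimpleGraph W) (k : ℕ)
    (hk : 2 * k ≤ Fintype.card W) : k ≤ annihilationNumber H := by
  classical
  -- find S ∈ powersetCard k univ minimizing degree sum
  have hne : (Finset.powersetCard k (Finset.univ : Finset W)).Nonempty := by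
    apply Finset.powersetCard_nonempty.2
    simpa using le_trans (by omega) hk
  obtain ⟨S, hSmem, hSmin⟩ := Finset.exists_min_image _ (fun S => ∑ v ∈ S, H.degree v) hne
  rw [Finset.mem_powersetCard] at hSmem
  obtain ⟨-, hScard⟩ := hSmem
  -- key: degree sum over S ≤ edge count
  have hdegsum : ∑ v ∈ S, H.degree v ≤ H.edgeFinset.card := by
    rcases Nat.eq_zero_or_pos k with hk0 | hkpos
    · have : S = ∅ := Finset.card_eq_zero.1 (by omega)
      simp [this]
    · -- Sᶜ nonempty
      have hcompl : (Sᶜ : Finset W).Nonempty := by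
        rw [← Finset.card_pos, Finset.card_compl, hScard]
        omega
      obtain ⟨t, htmem, htmin⟩ := Finset.exists_min_image _ (fun v => H.degree v) hcompl
      -- every s in S has degree ≤ degree t
      have hst : ∀ s ∈ S, H.degree s ≤ H.degree t := by
        intro s hs
        by_contra hlt
        push_neg at hlt
        have htS : t ∉ S := Finset.mem_compl.1 htmem
        set S' := insert t (S.erase s) with hS'
        have hcard' : S'.card = k := by
          rw [hS', Finset.card_insert_of_notMem (fun hmem => htS (Finset.mem_of_mem_erase hmem)),
            Finset.card_erase_of_mem hs, hScard]
          omega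
        have hmem' : S' ∈ Finset.powersetCard k Finset.univ := by
          rw [Finset.mem_powersetCard]; exact ⟨Finset.subset_univ _, hcard'⟩
        have := hSmin S' hmem'
        rw [hS', Finset.sum_insert (fun hmem => htS (Finset.mem_of_mem_erase hmem))] at this
        have hsum : ∑ v ∈ S, H.degree v = H.degree s + ∑ v ∈ S.erase s, H.degree v :=
          (Finset.add_sum_erase _ _ hs).symm
        omega
      -- Σ_S ≤ k * deg t ≤ Σ_{Sᶜ}
      have h1 : ∑ v ∈ S, H.degree v ≤ k * H.degree t := by
        calc ∑ v ∈ S, H.degree v ≤ ∑ _v ∈ S, H.degree t := Finset.sum_le_sum hst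
        _ = k * H.degree t := by rw [Finset.sum_const, hScard, smul_eq_mul]
      have h2 : k * H.degree t ≤ ∑ v ∈ Sᶜ, H.degree v := by
        calc k * H.degree t ≤ (Sᶜ : Finset W).card * H.degree t := by
              apply Nat.mul_le_mul_right
              rw [Finset.card_compl, hScard]; omega
        _ = ∑ _v ∈ Sᶜ, H.degree t := by rw [Finset.sum_const, smul_eq_mul]
        _ ≤ ∑ v ∈ Sᶜ, H.degree v := Finset.sum_le_sum (fun v hv => htmin v hv)
      have h3 : ∑ v ∈ S, H.degree v + ∑ v ∈ Sᶜ, H.degree v = 2 * H.edgeFinset.card := by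
        rw [Finset.sum_add_sum_compl]
        exact SimpleGraph.sum_degrees_eq_twice_card_edges H
      omega
  -- conclude
  have hmem : k ∈ {k | ∃ S : Finset W, S.card = k ∧
      ∑ v ∈ S, (H.neighborSet v).ncard ≤ H.edgeSet.ncard} := by
    refine ⟨S, hScard, ?_⟩
    have : ∑ v ∈ S, (H.neighborSet v).ncard = ∑ v ∈ S, H.degree v :=
      Finset.sum_congr rfl fun v _ => by rw [Set.ncard_eq_toFinset_card']; rfl
    rw [this, Set.ncard_eq_toFinset_card' H.edgeSet]
    exact hdegsum
  refine le_csSup ⟨Fintype.card W, ?_⟩ hmem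
  rintro x ⟨S, hS, -⟩
  exact hS ▸ Finset.card_le_univ S

lemma td_le {V : Type*} [Fintype V] (G : SimpleGraph V)
    (hconn : G.Connected) (hn : 2 ≤ Fintype.card V) :
    totalDominationNumber (mycielskian G) ≤ Fintype.card V + 1 := by
  classical
  have hadj : ∀ v : V, ∃ u, G.Adj v u := by
    intro v
    obtain ⟨u, hu⟩ := Fintype.exists_ne_of_one_lt_card (by omega) v
    obtain ⟨p⟩ := hconn.preconnected v u
    cases p with
    | nil => exact absurd rfl hu.symm
    | cons h _ => exact ⟨_, h⟩
  set D : Finset (V ⊕ (V ⊕ Unit)) :=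
    Finset.univ.map ⟨Sum.inr, Sum.inr_injective⟩ with hD
  have hcard : D.card = Fintype.card V + 1 := by
    simp [hD]
  have hdom : ∀ x : V ⊕ (V ⊕ Unit), ∃ u ∈ D, (mycielskian G).Adj x u := by
    intro x
    match x with
    | Sum.inl v =>
      obtain ⟨u, hu⟩ := hadj v
      refine ⟨Sum.inr (Sum.inl u), by simp [hD], ?_⟩
      rw [mycielskian, SimpleGraph.fromRel_adj]
      exact ⟨by simp, Or.inl (Or.inr (Or.inl ⟨v, u, hu, rfl, rfl⟩))⟩
    | Sum.inr (Sum.inl u) =>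
      refine ⟨Sum.inr (Sum.inr ()), by simp [hD], ?_⟩
      rw [mycielskian, SimpleGraph.fromRel_adj]
      exact ⟨by simp, Or.inl (Or.inr (Or.inr ⟨u, rfl, rfl⟩))⟩
    | Sum.inr (Sum.inr ()) =>
      have : Nonempty V := Fintype.card_pos_iff.1 (by omega)
      obtain ⟨u⟩ := this
      refine ⟨Sum.inr (Sum.inl u), by simp [hD], ?_⟩
      rw [mycielskian, SimpleGraph.fromRel_adj]
      exact ⟨by simp, Or.inr (Or.inr (Or.inr ⟨u, rfl, rfl⟩))⟩
  exact Nat.sInf_le ⟨D, hdom, hcard⟩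

/-- If `G` is a connected graph (with at least two vertices) satisfying
`γₜ(G) ≤ a(G) + 1`, then `γₜ(μ(G)) ≤ a(μ(G)) + 1`. -/
theorem stmt_10 {V : Type*} [Fintype V] (G : SimpleGraph V)
    (hconn : G.Connected) (hn : 2 ≤ Fintype.card V)
    (h : totalDominationNumber G ≤ annihilationNumber G + 1) :
    totalDominationNumber (mycielskian G) ≤ annihilationNumber (mycielskian G) + 1 := by
  classical
  have key1 : totalDominationNumber (mycielskian G) ≤ Fintype.card V + 1 :=
    td_le G hconn hn
  have key2 : Fintype.card V ≤ annihilationNumber (mycielskian G) := by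
    apply anni_ge
    simp only [Fintype.card_sum, Fintype.card_unit]
    omega
  omega
end

section
/- If G is a connected graph with at least one edge, then a(μ(G)) ≥ a(G) + 1, where μ(G) is the Mycielskian of G. -/
/-!
Let `S` be a set of `a(G)` vertices whose degree sum is at most `m(G)`. In `μ(G)` every original
vertex has twice its degree in `G`, the apex `w` has degree `n(G)`, and by the handshake lemma
`m(μ(G)) = 3 m(G) + n(G)`. So the copy of `S` in `μ(G)` together with `w` is a set of
`a(G) + 1` vertices with degree sum at most `2 m(G) + n(G) ≤ m(μ(G))`.
-/

open SimpleGraph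

namespace SimpleGraph

variable {V : Type*}

theorem sum_ncard_neighborSet [Fintype V] (G : SimpleGraph V) :
    ∑ v, (G.neighborSet v).ncard = 2 * G.edgeSet.ncard := by
  classical
  simp only [Set.ncard_eq_toFinset_card', Set.toFinset_card, card_neighborSet_eq_degree]
  rw [sum_degrees_eq_twice_card_edges, edgeFinset_card]

section Annihilation

variable [Fintype V] (G : SimpleGraph V)

theorem bddAbove_annihilationSizes :
    BddAbove {k | ∃ S : Finset V, S.card = k ∧
      ∑ v ∈ S, (G.neighborSet v).ncard ≤ G.edgeSet.ncard} :=
  ⟨Fintype.card V, by rintro k ⟨S, rfl, -⟩; exact S.card_le_univ⟩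

theorem le_annihilationNumber {S : Finset V}
    (hS : ∑ v ∈ S, (G.neighborSet v).ncard ≤ G.edgeSet.ncard) :
    S.card ≤ annihilationNumber G :=
  le_csSup G.bddAbove_annihilationSizes ⟨S, rfl, hS⟩

theorem exists_card_eq_annihilationNumber :
    ∃ S : Finset V, S.card = annihilationNumber G ∧
      ∑ v ∈ S, (G.neighborSet v).ncard ≤ G.edgeSet.ncard := by
  refine Nat.sSup_mem ⟨0, ?_⟩ G.bddAbove_annihilationSizes
  exact ⟨∅, rfl, by simp⟩

end Annihilation

section Mycielskian

variable (G : SimpleGraph V)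

theorem mycielskian_neighborSet_inl (v : V) :
    (mycielskian G).neighborSet (.inl v) =
      .inl '' G.neighborSet v ∪ (.inr ∘ .inl) '' G.neighborSet v := by
  ext b
  aesop (add norm unfold mycielskian, safe forward Adj.symm)

theorem mycielskian_neighborSet_inr_inl (v : V) :
    (mycielskian G).neighborSet (.inr (.inl v)) = .inl '' G.neighborSet v ∪ {.inr (.inr ())} := by
  ext b
  aesop (add norm unfold mycielskian, safe forward Adj.symm)

theorem mycielskian_neighborSet_inr_inr :
    (mycielskian G).neighborSet (.inr (.inr ())) = Set.range (.inr ∘ .inl) := by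
  ext b
  aesop (add norm unfold mycielskian, safe forward Adj.symm)

theorem ncard_mycielskian_neighborSet_inr_inr :
    ((mycielskian G).neighborSet (.inr (.inr ()))).ncard = Nat.card V := by
  rw [mycielskian_neighborSet_inr_inr,
    Set.ncard_range_of_injective (Sum.inr_injective.comp Sum.inl_injective)]

theorem ncard_mycielskian_neighborSet_inl [Finite V] (v : V) :
    ((mycielskian G).neighborSet (.inl v)).ncard = 2 * (G.neighborSet v).ncard := by
  rw [mycielskian_neighborSet_inl, Set.ncard_union_eq,
    Set.ncard_image_of_injective _ Sum.inl_injective,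
    Set.ncard_image_of_injective _ (Sum.inr_injective.comp Sum.inl_injective), two_mul]
  simp [Set.disjoint_left]

theorem ncard_mycielskian_neighborSet_inr_inl [Finite V] (v : V) :
    ((mycielskian G).neighborSet (.inr (.inl v))).ncard = (G.neighborSet v).ncard + 1 := by
  rw [mycielskian_neighborSet_inr_inl, Set.ncard_union_eq,
    Set.ncard_image_of_injective _ Sum.inl_injective, Set.ncard_singleton]
  simp

theorem ncard_mycielskian_edgeSet [Fintype V] :
    (mycielskian G).edgeSet.ncard = 3 * G.edgeSet.ncard + Fintype.card V := by
  have handshake := sum_ncard_neighborSet (mycielskian G)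
  simp only [Fintype.sum_sum_type, Finset.univ_unique, Finset.sum_singleton, PUnit.default_eq_unit,
    ncard_mycielskian_neighborSet_inl, ncard_mycielskian_neighborSet_inr_inl,
    ncard_mycielskian_neighborSet_inr_inr] at handshake
  rw [Finset.sum_add_distrib, ← Finset.mul_sum, sum_ncard_neighborSet, Finset.sum_const,
    Finset.card_univ, smul_eq_mul, mul_one, Nat.card_eq_fintype_card] at handshake
  omega

end Mycielskian

end SimpleGraph

theorem stmt_17_general {V : Type*} [Fintype V] (G : SimpleGraph V) :
    annihilationNumber G + 1 ≤ annihilationNumber (mycielskian G) := by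
  classical
  obtain ⟨S, hcard, hsum⟩ := G.exists_card_eq_annihilationNumber
  have hw : (.inr (.inr ()) : V ⊕ (V ⊕ Unit)) ∉ S.map .inl := by simp
  rw [← hcard, ← S.card_map .inl, ← Finset.card_insert_of_notMem hw]
  apply le_annihilationNumber
  rw [Finset.sum_insert hw, Finset.sum_map, ncard_mycielskian_edgeSet]
  simp only [Function.Embedding.inl_apply, ncard_mycielskian_neighborSet_inl,
    ncard_mycielskian_neighborSet_inr_inr, Nat.card_eq_fintype_card, ← Finset.mul_sum]
  omega

/-- If `G` is a connected graph with at least one edge, then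
`a(μ(G)) ≥ a(G) + 1`. -/
theorem stmt_17 {V : Type*} [Fintype V] (G : SimpleGraph V)
    (hconn : G.Connected) (hedge : G.edgeSet.Nonempty) :
    annihilationNumber G + 1 ≤ annihilationNumber (mycielskian G) :=
  stmt_17_general G
end
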